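/- arXiv:2105.09197 — 6 statements merged into one kernel-verified Lean document; each statement's English description precedes it below -/
import Mathlib

section
/- Let A ∈ 𝒮ⁿ[k] be a Robinson matrix, d ∈ 𝔻ᵏ, and let Π : [n] → ℝ satisfy the strict inequality system for A with respect to d. Then for every (u,v)-upper-bound-walk W, Π(v) − Π(u) < β⁺(W)ᵀ d, and for every (u,v)-lower-bound-walk W, β⁻(W)ᵀ d < Π(v) − Π(u). -/
/-- The standard unit vector `χ_t ∈ ℤᵏ` (as a function `ℕ → ℤ`, supported on index `t`). -/
def chi (t : ℕ) : ℕ → ℤ := fun i => if i = t then 1 else 0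

/-- The dot product `bᵀ d = Σ_{i=1}^k b_i d_i`. -/
def dotProd (k : ℕ) (b : ℕ → ℤ) (d : ℕ → ℝ) : ℝ :=
  ∑ i ∈ Finset.Icc 1 k, (b i : ℝ) * d i

/-- `A ∈ 𝒮ⁿ[k]`: a symmetric matrix with entries in `{0,…,k}`, diagonal `k`,
entries increasing towards the diagonal. -/
def IsRobinson (n k : ℕ) (a : Fin n → Fin n → ℕ) : Prop :=
  (∀ u v, a u v = a v u) ∧ (∀ u, a u u = k) ∧ (∀ u v, a u v ≤ k) ∧
    ∀ u v w : Fin n, u < v → v < w → a u w ≤ a u v ∧ a u w ≤ a v w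

/-- `d ∈ 𝔻ᵏ`: threshold vectors with `d 1 > d 2 > ⋯ > d k > 0`
(values outside `{1,…,k}` are irrelevant). -/
def IsThreshold (k : ℕ) (d : ℕ → ℝ) : Prop :=
  (∀ i, 1 ≤ i → i < k → d (i + 1) < d i) ∧ 0 < d k

/-- Uniform embedding: for all pairs `u,v` and all `t ≤ k`,
`a u v = t ↔ d_{t+1} < |f v − f u| ≤ d_t`, with conventions `d_0 = +∞`, `d_{k+1} = −∞`. -/
def IsUnifEmb (n k : ℕ) (a : Fin n → Fin n → ℕ) (d : ℕ → ℝ)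
    (f : Fin n → ℝ) : Prop :=
  ∀ u v : Fin n, ∀ t : ℕ, t ≤ k →
    (a u v = t ↔ (t = k ∨ d (t + 1) < |f v - f u|) ∧ (t = 0 ∨ |f v - f u| ≤ d t))

/-- The strict inequality system: for all `u < v` and all `t ≤ k`,
`a u v = t ↔ d_{t+1} < f v − f u < d_t`, with conventions `d_0 = +∞`, `d_{k+1} = 0`. -/
def SatisfiesStrict (n k : ℕ) (a : Fin n → Fin n → ℕ) (d : ℕ → ℝ)
    (f : Fin n → ℝ) : Prop :=
  ∀ u v : Fin n, u < v → ∀ t : ℕ, t ≤ k →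
    (a u v = t ↔ ((if t = k then (0 : ℝ) else d (t + 1)) < f v - f u) ∧
      (t = 0 ∨ f v - f u < d t))

/-- `β⁺(x,y)`: for `x < y`, `β⁺(x,y) = χ_{a x y}` (junk value `χ_0` when `a x y = 0`,
where it is undefined); for `x > y`, `β⁺(x,y) = −β⁻(y,x)`. -/
def betaP {n : ℕ} (k : ℕ) (a : Fin n → Fin n → ℕ) (x y : Fin n) : ℕ → ℤ :=
  if x < y then chi (a x y)
  else if y < x then (if a x y = k then 0 else -chi (a x y + 1))
  else 0

/-- `β⁻(x,y)`: for `x < y`, `β⁻(x,y) = χ_{a x y + 1}` if `a x y < k` and `0` if `a x y = k`;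
for `x > y`, `β⁻(x,y) = −β⁺(y,x)`. -/
def betaM {n : ℕ} (k : ℕ) (a : Fin n → Fin n → ℕ) (x y : Fin n) : ℕ → ℤ :=
  if x < y then (if a x y = k then 0 else chi (a x y + 1))
  else if y < x then -chi (a x y)
  else 0

/-- `β⁺(W) = Σ_i β⁺(w_{i−1}, w_i)` over the steps of the walk `W`. -/
def betaPWalk {n : ℕ} (k : ℕ) (a : Fin n → Fin n → ℕ) (w : List (Fin n)) : ℕ → ℤ :=
  ((w.zip w.tail).map fun p => betaP k a p.1 p.2).sum

/-- `β⁻(W) = Σ_i β⁻(w_{i−1}, w_i)` over the steps of the walk `W`. -/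
def betaMWalk {n : ℕ} (k : ℕ) (a : Fin n → Fin n → ℕ) (w : List (Fin n)) : ℕ → ℤ :=
  ((w.zip w.tail).map fun p => betaM k a p.1 p.2).sum

/-- A `(u,v)`-upper-bound-walk: a walk from `u` to `v` with consecutive entries distinct,
in which every increasing step is an edge (`a x y ≥ 1`). -/
def IsUBWalk {n : ℕ} (a : Fin n → Fin n → ℕ) (u v : Fin n) (w : List (Fin n)) : Prop :=
  w.head? = some u ∧ w.getLast? = some v ∧
    List.Chain' (fun x y => x ≠ y ∧ (x < y → 1 ≤ a x y)) w

/-- A `(u,v)`-lower-bound-walk: a walk from `u` to `v` with consecutive entries distinct,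
in which every decreasing step is an edge (`a x y ≥ 1`). -/
def IsLBWalk {n : ℕ} (a : Fin n → Fin n → ℕ) (u v : Fin n) (w : List (Fin n)) : Prop :=
  w.head? = some u ∧ w.getLast? = some v ∧
    List.Chain' (fun x y => x ≠ y ∧ (y < x → 1 ≤ a x y)) w

/-- An upper-bound-cycle: a `(u,u)`-upper-bound-walk of length `p ≥ 2` in which
`u = w_0 = w_p` is the only repeated vertex. -/
def IsUBCycle {n : ℕ} (a : Fin n → Fin n → ℕ) (w : List (Fin n)) : Prop :=
  ∃ u : Fin n, IsUBWalk a u u w ∧ 3 ≤ w.length ∧ w.dropLast.Nodup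

/-- The path condition for `A` and `d`: for all `u < v`, every `(u,v)`-upper-bound-path `W₁`
and every `(u,v)`-lower-bound-path `W₂` satisfy `β⁻(W₂)ᵀ d < β⁺(W₁)ᵀ d`. -/
def PathCondition (n k : ℕ) (a : Fin n → Fin n → ℕ) (d : ℕ → ℝ) : Prop :=
  ∀ u v : Fin n, u < v → ∀ w₁ w₂ : List (Fin n),
    IsUBWalk a u v w₁ → w₁.Nodup → IsLBWalk a u v w₂ → w₂.Nodup →
      dotProd k (betaMWalk k a w₂) d < dotProd k (betaPWalk k a w₁) d

/-- The prefix-sum partial order `⪯` on `ℤᵏ`. -/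
def Preceq (k : ℕ) (x y : ℕ → ℤ) : Prop :=
  ∀ t, 1 ≤ t → t ≤ k → ∑ i ∈ Finset.Icc 1 t, x i ≤ ∑ i ∈ Finset.Icc 1 t, y i
lemma dot_chi (k t : ℕ) (d : ℕ → ℝ) (ht1 : 1 ≤ t) (ht2 : t ≤ k) :
    dotProd k (chi t) d = d t := by
  unfold dotProd chi
  rw [Finset.sum_eq_single t]
  · simp
  · intro i _ hi; simp [hi]
  · intro h; exact absurd (Finset.mem_Icc.mpr ⟨ht1, ht2⟩) h

lemma dot_neg_chi (k t : ℕ) (d : ℕ → ℝ) (ht1 : 1 ≤ t) (ht2 : t ≤ k) :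
    dotProd k (-chi t) d = -d t := by
  have h := dot_chi k t d ht1 ht2
  unfold dotProd at *
  rw [← h, ← Finset.sum_neg_distrib]
  apply Finset.sum_congr rfl
  intro i _
  push_cast [Pi.neg_apply]
  ring

lemma dot_zero (k : ℕ) (d : ℕ → ℝ) : dotProd k 0 d = 0 := by
  simp [dotProd]

lemma dot_add (k : ℕ) (b₁ b₂ : ℕ → ℤ) (d : ℕ → ℝ) :
    dotProd k (b₁ + b₂) d = dotProd k b₁ d + dotProd k b₂ d := by
  unfold dotProd
  rw [← Finset.sum_add_distrib]
  apply Finset.sum_congr rfl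
  intro i _
  push_cast [Pi.add_apply]
  ring

lemma stepP (n k : ℕ) (a : Fin n → Fin n → ℕ) (hA : IsRobinson n k a)
    (d : ℕ → ℝ) (f : Fin n → ℝ) (hf : SatisfiesStrict n k a d f)
    (x y : Fin n) (hxy : x ≠ y) (hedge : x < y → 1 ≤ a x y) :
    f y - f x < dotProd k (betaP k a x y) d := by
  rcases lt_trichotomy x y with h | h | h
  · have ht : a x y ≤ k := hA.2.2.1 x y
    have h1 := hedge h
    have h2 := ((hf x y h (a x y) ht).mp rfl).2
    rcases h2 with h2 | h2
    · omega
    · rw [betaP, if_pos h, dot_chi k (a x y) d h1 ht]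
      exact h2
  · exact absurd h hxy
  · have hsym : a x y = a y x := hA.1 x y
    have ht : a y x ≤ k := hA.2.2.1 y x
    have h1 := ((hf y x h (a y x) ht).mp rfl).1
    rw [betaP, if_neg (not_lt.mpr h.le), if_pos h]
    by_cases hk' : a y x = k
    · rw [if_pos (hsym.trans hk'), dot_zero]
      rw [if_pos hk'] at h1
      linarith
    · rw [if_neg (hsym ▸ hk'), hsym,
        dot_neg_chi k (a y x + 1) d (by omega) (by omega)]
      rw [if_neg hk'] at h1
      linarith

lemma stepM (n k : ℕ) (a : Fin n → Fin n → ℕ) (hA : IsRobinson n k a)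
    (d : ℕ → ℝ) (f : Fin n → ℝ) (hf : SatisfiesStrict n k a d f)
    (x y : Fin n) (hxy : x ≠ y) (hedge : y < x → 1 ≤ a x y) :
    dotProd k (betaM k a x y) d < f y - f x := by
  rcases lt_trichotomy x y with h | h | h
  · have ht : a x y ≤ k := hA.2.2.1 x y
    have h1 := ((hf x y h (a x y) ht).mp rfl).1
    rw [betaM, if_pos h]
    by_cases hk' : a x y = k
    · rw [if_pos hk', dot_zero]
      rw [if_pos hk'] at h1
      linarith
    · rw [if_neg hk', dot_chi k (a x y + 1) d (by omega) (by omega)]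
      rw [if_neg hk'] at h1
      linarith
  · exact absurd h hxy
  · have hsym : a x y = a y x := hA.1 x y
    have ht : a y x ≤ k := hA.2.2.1 y x
    have hedge1 : 1 ≤ a y x := hsym ▸ hedge h
    have h2 := ((hf y x h (a y x) ht).mp rfl).2
    rcases h2 with h2 | h2
    · omega
    · rw [betaM, if_neg (not_lt.mpr h.le), if_pos h, hsym,
        dot_neg_chi k (a y x) d hedge1 ht]
      linarith

lemma walkP (n k : ℕ) (a : Fin n → Fin n → ℕ) (hA : IsRobinson n k a)
    (d : ℕ → ℝ) (f : Fin n → ℝ) (hf : SatisfiesStrict n k a d f)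
    (w : List (Fin n)) : ∀ u v : Fin n, 2 ≤ w.length → IsUBWalk a u v w →
    f v - f u < dotProd k (betaPWalk k a w) d := by
  induction w with
  | nil => intro u v hlen; simp at hlen
  | cons x rest ih =>
    intro u v hlen hw
    obtain ⟨hh, hl, hc⟩ := hw
    have hux : u = x := by simpa using hh.symm
    subst hux
    match rest, hlen with
    | y :: rest2, _ =>
      have hrel : u ≠ y ∧ (u < y → 1 ≤ a u y) := (List.isChain_cons_cons.mp hc).1
      have hstep := stepP n k a hA d f hf u y hrel.1 hrel.2
      have hsum : betaPWalk k a (u :: y :: rest2)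
          = betaP k a u y + betaPWalk k a (y :: rest2) := by
        simp [betaPWalk]
      match rest2 with
      | [] =>
        have hvy : v = y := by simpa using hl.symm
        subst hvy
        rw [hsum, dot_add]
        have : betaPWalk k a [v] = 0 := by simp [betaPWalk]
        rw [this, dot_zero]
        linarith
      | z :: rest3 =>
        have htail : IsUBWalk a y v (y :: z :: rest3) :=
          ⟨rfl, by simpa [List.getLast?_cons_cons] using hl, (List.isChain_cons_cons.mp hc).2⟩
        have hih := ih y v (by simp) htail
        rw [hsum, dot_add]
        linarith

lemma walkM (n k : ℕ) (a : Fin n → Fin n → ℕ) (hA : IsRobinson n k a)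
    (d : ℕ → ℝ) (f : Fin n → ℝ) (hf : SatisfiesStrict n k a d f)
    (w : List (Fin n)) : ∀ u v : Fin n, 2 ≤ w.length → IsLBWalk a u v w →
    dotProd k (betaMWalk k a w) d < f v - f u := by
  induction w with
  | nil => intro u v hlen; simp at hlen
  | cons x rest ih =>
    intro u v hlen hw
    obtain ⟨hh, hl, hc⟩ := hw
    have hux : u = x := by simpa using hh.symm
    subst hux
    match rest, hlen with
    | y :: rest2, _ =>
      have hrel : u ≠ y ∧ (y < u → 1 ≤ a u y) := (List.isChain_cons_cons.mp hc).1
      have hstep := stepM n k a hA d f hf u y hrel.1 hrel.2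
      have hsum : betaMWalk k a (u :: y :: rest2)
          = betaM k a u y + betaMWalk k a (y :: rest2) := by
        simp [betaMWalk]
      match rest2 with
      | [] =>
        have hvy : v = y := by simpa using hl.symm
        subst hvy
        rw [hsum, dot_add]
        have : betaMWalk k a [v] = 0 := by simp [betaMWalk]
        rw [this, dot_zero]
        linarith
      | z :: rest3 =>
        have htail : IsLBWalk a y v (y :: z :: rest3) :=
          ⟨rfl, by simpa [List.getLast?_cons_cons] using hl, (List.isChain_cons_cons.mp hc).2⟩
        have hih := ih y v (by simp) htail
        rw [hsum, dot_add]
        linarith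

/-- Lemma 1: if `Π` satisfies the strict inequality system for `A` with
respect to `d ∈ 𝔻ᵏ`, then for every `(u,v)`-upper-bound-walk `W`,
`Π v − Π u < β⁺(W)ᵀ d`, and for every `(u,v)`-lower-bound-walk `W`,
`β⁻(W)ᵀ d < Π v − Π u`. (A walk has at least one step, i.e. the list has length ≥ 2.) -/
theorem statement2 (n k : ℕ) (hn : 1 ≤ n) (hk : 1 ≤ k) (a : Fin n → Fin n → ℕ)
    (hA : IsRobinson n k a) (d : ℕ → ℝ) (hd : IsThreshold k d)
    (f : Fin n → ℝ) (hf : SatisfiesStrict n k a d f)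
    (u v : Fin n) (w : List (Fin n)) (hlen : 2 ≤ w.length) :
    (IsUBWalk a u v w → f v - f u < dotProd k (betaPWalk k a w) d) ∧
      (IsLBWalk a u v w → dotProd k (betaMWalk k a w) d < f v - f u) := by
  exact ⟨walkP n k a hA d f hf w u v hlen, walkM n k a hA d f hf w u v hlen⟩
end

section
/- Let A ∈ 𝒮ⁿ[k] be a Robinson matrix and let d ∈ 𝔻ᵏ satisfy the path condition for A. Then for every (u,v)-upper-bound-walk W there exists a (u,v)-upper-bound-path W′ with β⁺(W′)ᵀ d ≤ β⁺(W)ᵀ d, and for every (u,v)-lower-bound-walk W there exists a (u,v)-lower-bound-path W′ with β⁻(W′)ᵀ d ≥ β⁻(W)ᵀ d. -/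
/-!
Cutting out the closed sub-walk between two occurrences of a vertex changes `β⁺(W)ᵀ d` by the
value of that closed walk. Taking the innermost repetition, the closed walk is a simple cycle
`x → y → ⋯ → x`; the path condition, applied to the one-step path between `x` and `y` and to the
rest of the cycle (reversed when `x < y`), shows that its value is positive. Lower-bound walks
reduce to upper-bound walks by reversal, which turns `β⁻` into `-β⁺`.
-/

section StepSum

variable {α M : Type*}

def stepSum [AddCommMonoid M] (f : α → α → M) (l : List α) : M :=
  ((l.zip l.tail).map fun p => f p.1 p.2).sum

section AddCommMonoid

variable [AddCommMonoid M] (f : α → α → M)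

@[simp]
theorem stepSum_singleton (x : α) : stepSum f [x] = 0 := rfl

@[simp]
theorem stepSum_cons_cons (x y : α) (l : List α) :
    stepSum f (x :: y :: l) = f x y + stepSum f (y :: l) := by
  simp [stepSum]

theorem stepSum_append_cons (l₁ : List α) (x : α) (l₂ : List α) :
    stepSum f (l₁ ++ x :: l₂) = stepSum f (l₁ ++ [x]) + stepSum f (x :: l₂) := by
  induction l₁ with
  | nil => simp
  | cons y l ih =>
    cases l with
    | nil => simp
    | cons z l => simp only [List.cons_append, stepSum_cons_cons] at ih ⊢; rw [ih, add_assoc]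

theorem stepSum_reverse (l : List α) : stepSum f l.reverse = stepSum (fun x y => f y x) l := by
  induction l with
  | nil => rfl
  | cons x l ih =>
    cases l with
    | nil => simp
    | cons y l =>
      rw [List.reverse_cons, List.reverse_cons, List.append_assoc, List.singleton_append,
        stepSum_append_cons, ← List.reverse_cons, ih, stepSum_cons_cons, stepSum_cons_cons,
        stepSum_singleton, add_zero, add_comm]

theorem map_stepSum {N : Type*} [AddCommMonoid N] (g : M →+ N) (l : List α) :
    g (stepSum f l) = stepSum (fun x y => g (f x y)) l := by
  simp [stepSum, map_list_sum, List.map_map, Function.comp_def]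

end AddCommMonoid

theorem List.exists_eq_append_cons_append_cons_of_not_nodup :
    ∀ {l : List α}, ¬l.Nodup → ∃ y P Q S, l = P ++ y :: (Q ++ y :: S) ∧ (y :: Q).Nodup
  | [], h => absurd List.nodup_nil h
  | x :: t, h => by
    by_cases ht : t.Nodup
    · have hx : x ∈ t := by simpa [ht] using h
      obtain ⟨Q, S, rfl⟩ := List.append_of_mem hx
      exact ⟨x, [], Q, S, rfl, List.nodup_cons.2
        ⟨fun hQ => List.disjoint_of_nodup_append ht hQ List.mem_cons_self,
          ht.sublist (List.sublist_append_left Q _)⟩⟩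
    · obtain ⟨y, P, Q, S, rfl, hQ⟩ := exists_eq_append_cons_append_cons_of_not_nodup ht
      exact ⟨y, x :: P, Q, S, rfl, hQ⟩

theorem exists_nodup_stepSum_le [AddCommMonoid M] [PartialOrder M] [IsOrderedAddMonoid M]
    (f : α → α → M) {R : α → α → Prop}
    (hcycle : ∀ y Q, (y :: Q).Nodup → (y :: (Q ++ [y])).IsChain R →
      0 ≤ stepSum f (y :: (Q ++ [y])))
    (l : List α) (hl : l.IsChain R) :
    ∃ l', l'.IsChain R ∧ l'.Nodup ∧ l'.head? = l.head? ∧ l'.getLast? = l.getLast? ∧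
      stepSum f l' ≤ stepSum f l := by
  induction hlen : l.length using Nat.strong_induction_on generalizing l with
  | _ m ih =>
    by_cases hnd : l.Nodup
    · exact ⟨l, hl, hnd, rfl, rfl, le_rfl⟩
    obtain ⟨y, P, Q, S, rfl, hQ⟩ := List.exists_eq_append_cons_append_cons_of_not_nodup hnd
    obtain ⟨hP, hQyS⟩ := List.isChain_split.1 hl
    obtain ⟨hQy, hS⟩ := List.isChain_cons_split.1 hQyS
    have hshort : (P ++ y :: S).IsChain R := List.isChain_split.2 ⟨hP, hS⟩
    obtain ⟨l', hl', hnd', hhead, hlast, hle⟩ :=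
      ih _ (by subst hlen; simp only [List.length_append, List.length_cons]; omega) _ hshort rfl
    refine ⟨l', hl', hnd', ?_, ?_, ?_⟩
    · rw [hhead]; cases P <;> simp
    · rw [hlast]; simp [List.getLast?_append, List.getLast?_cons]
    · calc stepSum f l' ≤ stepSum f (P ++ y :: S) := hle
        _ = stepSum f (P ++ [y]) + 0 + stepSum f (y :: S) := by
          rw [stepSum_append_cons, add_zero]
        _ ≤ stepSum f (P ++ [y]) + stepSum f (y :: (Q ++ [y])) + stepSum f (y :: S) := by
          gcongr; exact hcycle y Q hQ hQy
        _ = stepSum f (P ++ y :: (Q ++ y :: S)) := by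
          have hsplit : stepSum f (y :: (Q ++ y :: S)) =
              stepSum f (y :: (Q ++ [y])) + stepSum f (y :: S) :=
            stepSum_append_cons f (y :: Q) y S
          rw [stepSum_append_cons f P y (Q ++ y :: S), hsplit, add_assoc]

end StepSum

def dotProdHom (k : ℕ) (d : ℕ → ℝ) : (ℕ → ℤ) →+ ℝ where
  toFun b := dotProd k b d
  map_zero' := by simp [dotProd]
  map_add' b c := by simp [dotProd, add_mul, Finset.sum_add_distrib]

theorem dotProd_add (k : ℕ) (b c : ℕ → ℤ) (d : ℕ → ℝ) :
    dotProd k (b + c) d = dotProd k b d + dotProd k c d :=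
  map_add (dotProdHom k d) b c

theorem dotProd_neg (k : ℕ) (b : ℕ → ℤ) (d : ℕ → ℝ) : dotProd k (-b) d = -dotProd k b d :=
  map_neg (dotProdHom k d) b

section Walks

variable {n k : ℕ} {a : Fin n → Fin n → ℕ}

theorem betaM_swap (hsym : ∀ u v, a u v = a v u) (x y : Fin n) :
    betaM k a y x = -betaP k a x y := by
  unfold betaM betaP
  rcases lt_trichotomy x y with h | rfl | h
  · simp only [if_pos h, if_neg (asymm h), hsym y x]
  · simp
  · simp only [if_pos h, if_neg (asymm h), hsym y x]
    split <;> simp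

theorem betaMWalk_reverse (hsym : ∀ u v, a u v = a v u) (w : List (Fin n)) :
    betaMWalk k a w.reverse = -betaPWalk k a w := by
  change stepSum _ _ = -stepSum _ _
  rw [stepSum_reverse]
  simp only [betaM_swap hsym]
  exact (map_stepSum (betaP k a) (-AddMonoidHom.id _) w).symm

theorem isLBWalk_reverse_iff (hsym : ∀ u v, a u v = a v u) {u v : Fin n} {w : List (Fin n)} :
    IsLBWalk a v u w.reverse ↔ IsUBWalk a u v w := by
  rw [IsLBWalk, IsUBWalk, List.head?_reverse, List.getLast?_reverse, and_left_comm]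
  refine and_congr_right' (and_congr_right' (List.isChain_reverse.trans ?_))
  simp only [ne_comm, hsym]
  rfl

theorem betaPWalk_cons_cons (x y : Fin n) (l : List (Fin n)) :
    betaPWalk k a (x :: y :: l) = betaP k a x y + betaPWalk k a (y :: l) :=
  stepSum_cons_cons _ x y l

theorem betaPWalk_pair (x y : Fin n) : betaPWalk k a [x, y] = betaP k a x y := by
  simp [betaPWalk]

theorem betaMWalk_pair (x y : Fin n) : betaMWalk k a [x, y] = betaM k a x y := by
  simp [betaMWalk]

theorem dotProd_betaPWalk (d : ℕ → ℝ) (w : List (Fin n)) :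
    dotProd k (betaPWalk k a w) d = stepSum (fun x y => dotProd k (betaP k a x y) d) w :=
  map_stepSum (betaP k a) (dotProdHom k d) w

variable {d : ℕ → ℝ}

theorem PathCondition.dotProd_betaPWalk_pos_of_simple_cycle (hsym : ∀ u v, a u v = a v u)
    (hpc : PathCondition n k a d) {x : Fin n} {Q : List (Fin n)} (hnd : (x :: Q).Nodup)
    (hw : IsUBWalk a x x (x :: (Q ++ [x]))) :
    0 < dotProd k (betaPWalk k a (x :: (Q ++ [x]))) d := by
  obtain ⟨-, -, hc⟩ := hw
  cases Q with
  | nil => exact absurd rfl (List.isChain_pair.1 hc).1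
  | cons y Q =>
    obtain ⟨hxy, hrest⟩ := List.isChain_cons_cons.1 hc
    have hp : IsUBWalk a y x (y :: (Q ++ [x])) :=
      ⟨rfl, by rw [← List.cons_append, List.getLast?_concat], hrest⟩
    have hpnd : (y :: (Q ++ [x])).Nodup := (List.nodup_append_comm (l₁ := [x])).1 hnd
    rw [List.cons_append, betaPWalk_cons_cons, dotProd_add]
    rcases lt_trichotomy x y with hlt | rfl | hgt
    · have := hpc x y hlt [x, y] (y :: (Q ++ [x])).reverse ⟨rfl, rfl, List.isChain_pair.2 hxy⟩
        (by simp [hxy.1]) ((isLBWalk_reverse_iff hsym).2 hp) (List.nodup_reverse.2 hpnd)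
      rw [betaMWalk_reverse hsym, dotProd_neg, betaPWalk_pair] at this
      linarith
    · exact absurd rfl hxy.1
    · have := hpc y x hgt (y :: (Q ++ [x])) [y, x] hp hpnd
        ⟨rfl, rfl, List.isChain_pair.2 ⟨Ne.symm hxy.1, fun h => absurd h (asymm hgt)⟩⟩
        (by simp [Ne.symm hxy.1])
      rw [betaMWalk_pair, betaM_swap hsym, dotProd_neg] at this
      linarith

theorem PathCondition.exists_isUBWalk_nodup_le (hsym : ∀ u v, a u v = a v u)
    (hpc : PathCondition n k a d) {u v : Fin n} {w : List (Fin n)} (hw : IsUBWalk a u v w) :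
    ∃ w', IsUBWalk a u v w' ∧ w'.Nodup ∧
      dotProd k (betaPWalk k a w') d ≤ dotProd k (betaPWalk k a w) d := by
  obtain ⟨hu, hv, hc⟩ := hw
  obtain ⟨w', hc', hnd', hu', hv', hle⟩ :=
    exists_nodup_stepSum_le (fun x y => dotProd k (betaP k a x y) d)
      (fun y Q hQ hc => by
        rw [← dotProd_betaPWalk]
        refine (hpc.dotProd_betaPWalk_pos_of_simple_cycle hsym hQ ⟨rfl, ?_, hc⟩).le
        rw [← List.cons_append, List.getLast?_concat])
      w hc
  refine ⟨w', ⟨hu'.trans hu, hv'.trans hv, hc'⟩, hnd', ?_⟩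
  rwa [dotProd_betaPWalk, dotProd_betaPWalk]

end Walks

theorem statement6_general (n k : ℕ) (a : Fin n → Fin n → ℕ)
    (hA : IsRobinson n k a) (d : ℕ → ℝ)
    (hpc : PathCondition n k a d) (u v : Fin n) (w : List (Fin n)) :
    (IsUBWalk a u v w → ∃ w' : List (Fin n), IsUBWalk a u v w' ∧ w'.Nodup ∧
        dotProd k (betaPWalk k a w') d ≤ dotProd k (betaPWalk k a w) d) ∧
      (IsLBWalk a u v w → ∃ w' : List (Fin n), IsLBWalk a u v w' ∧ w'.Nodup ∧
        dotProd k (betaMWalk k a w) d ≤ dotProd k (betaMWalk k a w') d) := by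
  have hsym := hA.1
  refine ⟨hpc.exists_isUBWalk_nodup_le hsym, fun hw => ?_⟩
  have hw' : IsUBWalk a v u w.reverse :=
    (isLBWalk_reverse_iff hsym).1 (by rwa [List.reverse_reverse])
  obtain ⟨p, hp, hpnd, hle⟩ := hpc.exists_isUBWalk_nodup_le hsym hw'
  refine ⟨p.reverse, (isLBWalk_reverse_iff hsym).2 hp, List.nodup_reverse.2 hpnd, ?_⟩
  have hwM : betaMWalk k a w = -betaPWalk k a w.reverse := by
    rw [← betaMWalk_reverse hsym, List.reverse_reverse]
  rw [hwM, betaMWalk_reverse hsym, dotProd_neg, dotProd_neg]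
  exact neg_le_neg hle

/-- Lemma 3: if `d ∈ 𝔻ᵏ` satisfies the path condition for `A`, then every
`(u,v)`-upper-bound-walk can be replaced by a `(u,v)`-upper-bound-path with an equal or
smaller bound, and every `(u,v)`-lower-bound-walk by a `(u,v)`-lower-bound-path with an
equal or larger bound. -/
theorem statement6 (n k : ℕ) (hn : 1 ≤ n) (hk : 1 ≤ k) (a : Fin n → Fin n → ℕ)
    (hA : IsRobinson n k a) (d : ℕ → ℝ) (hd : IsThreshold k d)
    (hpc : PathCondition n k a d) (u v : Fin n) (w : List (Fin n)) :
    (IsUBWalk a u v w → ∃ w' : List (Fin n), IsUBWalk a u v w' ∧ w'.Nodup ∧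
        dotProd k (betaPWalk k a w') d ≤ dotProd k (betaPWalk k a w) d) ∧
      (IsLBWalk a u v w → ∃ w' : List (Fin n), IsLBWalk a u v w' ∧ w'.Nodup ∧
        dotProd k (betaMWalk k a w) d ≤ dotProd k (betaMWalk k a w') d) :=
  statement6_general n k a hA d hpc u v w
end

section
/- Let a, b ∈ ℤᵏ with a ⪯ b. Then there exists c ∈ ℤᵏ such that c_i ≤ b_i for every i ∈ [k], Σ_{i=1}^k c_i = Σ_{i=1}^k a_i, and aᵀ d ≤ cᵀ d for every d ∈ 𝔻ᵏ. -/
lemma abel_sum (k : ℕ) (x d : ℕ → ℝ) :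
    ∑ i ∈ Finset.Icc 1 k, x i * d i =
      (∑ i ∈ Finset.Ico 1 k, (∑ j ∈ Finset.Icc 1 i, x j) * (d i - d (i + 1))) +
        (∑ j ∈ Finset.Icc 1 k, x j) * d k := by
  induction k with
  | zero => simp
  | succ k ih =>
    rcases Nat.eq_zero_or_pos k with hk0 | hk0
    · subst hk0; simp
    · rw [Finset.sum_Icc_succ_top (by omega : 1 ≤ k + 1),
          Finset.sum_Ico_succ_top hk0,
          Finset.sum_Icc_succ_top (by omega : 1 ≤ k + 1), ih]
      ring

/-- if `a ⪯ b` in `ℤᵏ`, then there is a "buffer" vector `c ∈ ℤᵏ` with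
`c_i ≤ b_i` for all `i ∈ [k]`, `Σ c_i = Σ a_i`, and `aᵀ d ≤ cᵀ d` for every `d ∈ 𝔻ᵏ`. -/
theorem statement11 (k : ℕ) (hk : 1 ≤ k) (x y : ℕ → ℤ) (h : Preceq k x y) :
    ∃ c : ℕ → ℤ, (∀ i, 1 ≤ i → i ≤ k → c i ≤ y i) ∧
      (∑ i ∈ Finset.Icc 1 k, c i) = (∑ i ∈ Finset.Icc 1 k, x i) ∧
      ∀ d : ℕ → ℝ, IsThreshold k d → dotProd k x d ≤ dotProd k c d := by
  classical
  refine ⟨fun i => if i = k then (∑ i ∈ Finset.Icc 1 k, x i) - ∑ i ∈ Finset.Ico 1 k, y i else y i,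
    ?_, ?_, ?_⟩
  · intro i h1 h2
    by_cases hik : i = k
    · subst hik
      simp only [if_pos rfl]
      have hy : ∑ i ∈ Finset.Icc 1 i, y i = (∑ j ∈ Finset.Ico 1 i, y j) + y i := by
        rw [← Finset.Ico_add_one_right_eq_Icc, Finset.sum_Ico_succ_top (by omega)]
      have := h i h1 h2
      omega
    · simp [hik]
  · have hy : ∑ i ∈ Finset.Icc 1 k, (if i = k then (∑ i ∈ Finset.Icc 1 k, x i) - ∑ i ∈ Finset.Ico 1 k, y i else y i)
        = (∑ j ∈ Finset.Ico 1 k, (if j = k then (∑ i ∈ Finset.Icc 1 k, x i) - ∑ i ∈ Finset.Ico 1 k, y i else y j))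
          + ((∑ i ∈ Finset.Icc 1 k, x i) - ∑ i ∈ Finset.Ico 1 k, y i) := by
      rw [← Finset.Ico_add_one_right_eq_Icc, Finset.sum_Ico_succ_top (by omega), if_pos rfl]
    rw [hy, Finset.sum_congr rfl (fun j hj => by
      rw [if_neg (by simp at hj; omega)])]
    ring
  · intro d hd
    set c : ℕ → ℤ := fun i => if i = k then (∑ i ∈ Finset.Icc 1 k, x i) - ∑ i ∈ Finset.Ico 1 k, y i else y i with hc
    unfold dotProd
    rw [abel_sum k (fun i => (x i : ℝ)) d, abel_sum k (fun i => (c i : ℝ)) d]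
    have hCk : ∑ j ∈ Finset.Icc 1 k, c j = ∑ j ∈ Finset.Icc 1 k, x j := by
      have hy : ∑ i ∈ Finset.Icc 1 k, c i = (∑ j ∈ Finset.Ico 1 k, c j) + c k := by
        rw [← Finset.Ico_add_one_right_eq_Icc, Finset.sum_Ico_succ_top (by omega)]
      rw [hy, Finset.sum_congr rfl (fun j hj => by
        show c j = y j
        rw [hc]; simp only []
        rw [if_neg (by simp at hj; omega)]),
        show c k = (∑ i ∈ Finset.Icc 1 k, x i) - ∑ i ∈ Finset.Ico 1 k, y i from by
          rw [hc]; simp]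
      ring
    have hpref : ∀ i ∈ Finset.Ico 1 k, ∑ j ∈ Finset.Icc 1 i, x j ≤ ∑ j ∈ Finset.Icc 1 i, c j := by
      intro i hi
      simp only [Finset.mem_Ico] at hi
      have : ∑ j ∈ Finset.Icc 1 i, c j = ∑ j ∈ Finset.Icc 1 i, y j :=
        Finset.sum_congr rfl (fun j hj => by
          show c j = y j
          rw [hc]; simp only []
          rw [if_neg (by simp at hj; omega)])
      rw [this]
      exact h i hi.1 (by omega)
    gcongr ?_ + ?_
    · apply Finset.sum_le_sum
      intro i hi
      have hmem := hi
      simp only [Finset.mem_Ico] at hmem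
      have hd1 : 0 ≤ d i - d (i + 1) := by
        have := hd.1 i hmem.1 hmem.2
        linarith
      have hx : (∑ j ∈ Finset.Icc 1 i, (x j : ℝ)) ≤ ∑ j ∈ Finset.Icc 1 i, (c j : ℝ) := by
        have := hpref i hi
        exact_mod_cast this
      exact mul_le_mul_of_nonneg_right hx hd1
    · have : (∑ j ∈ Finset.Icc 1 k, (x j : ℝ)) = ∑ j ∈ Finset.Icc 1 k, (c j : ℝ) := by
        exact_mod_cast congrArg (fun z : ℤ => (z : ℝ)) hCk.symm
      rw [this]
end

section
/- Let A ∈ 𝒮ⁿ[k] be a Robinson matrix, let 𝒞 be the set of upper-bound-cycles of A, and let B = {β⁺(C) : C ∈ 𝒞}. If d ∈ 𝔻ᵏ satisfies β⁺(C)ᵀ d > 0 for every C ∈ 𝒞 such that β⁺(C) is a minimal element of B under the partial order ⪯, then β⁺(C)ᵀ d > 0 for every C ∈ 𝒞. -/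
/-!
A strictly decreasing threshold vector `d` turns `⪯` into a monotone comparison:
by Abel summation `bᵀd` is a nonnegative combination of the prefix sums of `b` with
weights `d_t - d_{t+1}` (and `d_k`). Upper-bound-cycles repeat no vertex, so there are
finitely many of them, and the strict part of `⪯` is well founded on their bounds;
every bound thus lies above a minimal one, whose positivity propagates upwards.
-/

section Preceq

variable {k : ℕ}

theorem preceq_refl (x : ℕ → ℤ) : Preceq k x x := fun _ _ _ => le_rfl

theorem Preceq.trans {x y z : ℕ → ℤ} (hxy : Preceq k x y) (hyz : Preceq k y z) :
    Preceq k x z := fun t h1 h2 => (hxy t h1 h2).trans (hyz t h1 h2)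

def StrictPreceq (k : ℕ) (x y : ℕ → ℤ) : Prop := Preceq k x y ∧ ¬Preceq k y x

instance : IsStrictOrder (ℕ → ℤ) (StrictPreceq k) where
  irrefl x h := h.2 (preceq_refl x)
  trans _ _ _ hxy hyz := ⟨hxy.1.trans hyz.1, fun hzx => hxy.2 (hyz.1.trans hzx)⟩

end Preceq

theorem sum_Icc_mul_eq_sum_prefix_mul_sub (x : ℕ → ℤ) (d : ℕ → ℝ) (k : ℕ) :
    ∑ i ∈ Finset.Icc 1 k, (x i : ℝ) * d i
      = ∑ t ∈ Finset.Icc 1 k, ((∑ i ∈ Finset.Icc 1 t, x i : ℤ) : ℝ) * (d t - d (t + 1))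
        + ((∑ i ∈ Finset.Icc 1 k, x i : ℤ) : ℝ) * d (k + 1) := by
  induction k with
  | zero => simp
  | succ k ih =>
    simp only [Finset.sum_Icc_succ_top (Nat.le_add_left 1 k), ih]
    push_cast
    ring

theorem dotProd_le_dotProd_of_preceq {k : ℕ} {x y : ℕ → ℤ} {d : ℕ → ℝ}
    (hd : IsThreshold k d) (h : Preceq k x y) : dotProd k x d ≤ dotProd k y d := by
  -- replacing `d (k + 1)` by `0` kills the boundary term of the Abel summation
  obtain ⟨d', hd'_top, hd'_eq⟩ : ∃ d' : ℕ → ℝ, d' (k + 1) = 0 ∧ ∀ i ≤ k, d' i = d i :=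
    ⟨Function.update d (k + 1) 0, by simp, fun i hi => Function.update_of_ne (by omega) _ _⟩
  have hdd' : ∀ z, dotProd k z d = dotProd k z d' := fun z =>
    Finset.sum_congr rfl fun i hi => by rw [hd'_eq i (Finset.mem_Icc.1 hi).2]
  have hweight : ∀ t ∈ Finset.Icc 1 k, 0 ≤ d' t - d' (t + 1) := by
    intro t ht
    obtain ⟨ht1, htk⟩ := Finset.mem_Icc.1 ht
    rw [hd'_eq t htk]
    rcases htk.lt_or_eq with htk | rfl
    · rw [hd'_eq (t + 1) htk]
      exact sub_nonneg.2 (hd.1 t ht1 htk).le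
    · simpa [hd'_top] using hd.2.le
  rw [hdd', hdd', dotProd, dotProd, sum_Icc_mul_eq_sum_prefix_mul_sub x,
    sum_Icc_mul_eq_sum_prefix_mul_sub y, hd'_top, mul_zero, mul_zero, add_zero, add_zero]
  refine Finset.sum_le_sum fun t ht => mul_le_mul_of_nonneg_right ?_ (hweight t ht)
  obtain ⟨ht1, htk⟩ := Finset.mem_Icc.1 ht
  exact_mod_cast h t ht1 htk

theorem IsUBCycle.length_le {n : ℕ} {a : Fin n → Fin n → ℕ} {C : List (Fin n)}
    (hC : IsUBCycle a C) : C.length ≤ n + 1 := by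
  obtain ⟨_, _, _, hnodup⟩ := hC
  have := hnodup.length_le_card
  simp only [List.length_dropLast, Fintype.card_fin] at this
  omega

theorem finite_setOf_isUBCycle {n : ℕ} (a : Fin n → Fin n → ℕ) :
    {C | IsUBCycle a C}.Finite :=
  (List.finite_length_le (Fin n) (n + 1)).subset fun _ hC => IsUBCycle.length_le hC

theorem statement13_general (n k : ℕ) (a : Fin n → Fin n → ℕ)
    (d : ℕ → ℝ) (hd : IsThreshold k d)
    (hmin : ∀ C : List (Fin n), IsUBCycle a C →
      (∀ C' : List (Fin n), IsUBCycle a C' →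
        Preceq k (betaPWalk k a C') (betaPWalk k a C) →
        Preceq k (betaPWalk k a C) (betaPWalk k a C')) →
      0 < dotProd k (betaPWalk k a C) d) :
    ∀ C : List (Fin n), IsUBCycle a C → 0 < dotProd k (betaPWalk k a C) d := by
  intro C₀ hC₀
  have hwf :
      {C | IsUBCycle a C}.WellFoundedOn (Function.onFun (StrictPreceq k) (betaPWalk k a)) :=
    Set.wellFoundedOn_image.1 ((finite_setOf_isUBCycle a).image _).wellFoundedOn
  refine hwf.induction (P := fun C => 0 < dotProd k (betaPWalk k a C) d) hC₀
    fun C hC ih => ?_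
  by_cases hminimal : ∀ C' : List (Fin n), IsUBCycle a C' →
      Preceq k (betaPWalk k a C') (betaPWalk k a C) →
      Preceq k (betaPWalk k a C) (betaPWalk k a C')
  · exact hmin C hC hminimal
  · push Not at hminimal
    obtain ⟨C', hC', hle, hnot⟩ := hminimal
    exact (ih C' hC' ⟨hle, hnot⟩).trans_le (dotProd_le_dotProd_of_preceq hd hle)

/-- Corollary 2: if `d ∈ 𝔻ᵏ` satisfies `β⁺(C)ᵀ d > 0` for every
upper-bound-cycle `C` whose bound `β⁺(C)` is minimal under `⪯` among all cycle bounds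
`B = {β⁺(C') : C' an upper-bound-cycle}`, then `β⁺(C)ᵀ d > 0` for every upper-bound-cycle. -/
theorem statement13 (n k : ℕ) (hn : 1 ≤ n) (hk : 1 ≤ k) (a : Fin n → Fin n → ℕ)
    (hA : IsRobinson n k a) (d : ℕ → ℝ) (hd : IsThreshold k d)
    (hmin : ∀ C : List (Fin n), IsUBCycle a C →
      (∀ C' : List (Fin n), IsUBCycle a C' →
        Preceq k (betaPWalk k a C') (betaPWalk k a C) →
        Preceq k (betaPWalk k a C) (betaPWalk k a C')) →
      0 < dotProd k (betaPWalk k a C) d) :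
    ∀ C : List (Fin n), IsUBCycle a C → 0 < dotProd k (betaPWalk k a C) d :=
  statement13_general n k a d hd hmin
end

section
/- For every integer t ≥ 1, let S_t = {a ∈ ℤ² : |a₁| + |a₂| = t}, S_t¹ = {(−t+i, i) : 0 ≤ i ≤ t} ∪ {(i, t−i) : 1 ≤ i < t}, and S_t² = {(−t+i, −i) : 1 ≤ i ≤ t} ∪ {(i, −t+i) : 1 ≤ i ≤ t}. Then S_t¹ and S_t² are both chains (totally ordered subsets) under the partial order ⪯ on ℤ², and they partition S_t (i.e. S_t = S_t¹ ∪ S_t² and S_t¹ ∩ S_t² = ∅). Consequently, every antichain under ⪯ contained in {a ∈ ℤ² : 1 ≤ |a₁| + |a₂| ≤ n} has at most 2n elements. -/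
/-- The prefix-sum partial order `⪯` on `ℤ²`: `a ⪯ b` iff `a₁ ≤ b₁` and `a₁ + a₂ ≤ b₁ + b₂`. -/
def Preceq2 (x y : ℤ × ℤ) : Prop := x.1 ≤ y.1 ∧ x.1 + x.2 ≤ y.1 + y.2

/-- `S_t = {a ∈ ℤ² : |a₁| + |a₂| = t}`. -/
def St (t : ℤ) : Set (ℤ × ℤ) := {p | |p.1| + |p.2| = t}

/-- `S_t¹ = {(−t+i, i) : 0 ≤ i ≤ t} ∪ {(i, t−i) : 1 ≤ i < t}`. -/
def St1 (t : ℤ) : Set (ℤ × ℤ) :=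
  {p | ∃ i : ℤ, 0 ≤ i ∧ i ≤ t ∧ p = (-t + i, i)} ∪
    {p | ∃ i : ℤ, 1 ≤ i ∧ i < t ∧ p = (i, t - i)}

/-- `S_t² = {(−t+i, −i) : 1 ≤ i ≤ t} ∪ {(i, −t+i) : 1 ≤ i ≤ t}`. -/
def St2 (t : ℤ) : Set (ℤ × ℤ) :=
  {p | ∃ i : ℤ, 1 ≤ i ∧ i ≤ t ∧ p = (-t + i, -i)} ∪
    {p | ∃ i : ℤ, 1 ≤ i ∧ i ≤ t ∧ p = (i, -t + i)}

lemma St1_char (t : ℤ) (ht : 1 ≤ t) (p : ℤ × ℤ) :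
    p ∈ St1 t ↔ |p.1| + |p.2| = t ∧ (0 < p.2 ∨ (p.2 = 0 ∧ p.1 < 0)) := by
  simp only [St1, Set.mem_union, Set.mem_setOf_eq, Prod.ext_iff, Int.abs_eq_natAbs]
  constructor
  · rintro (⟨i, h1, h2, h3, h4⟩ | ⟨i, h1, h2, h3, h4⟩) <;> omega
  · rintro ⟨habs, h⟩
    by_cases hx : p.1 ≤ 0
    · exact Or.inl ⟨p.2, by omega, by omega, by omega, rfl⟩
    · exact Or.inr ⟨p.1, by omega, by omega, rfl, by omega⟩

lemma St2_char (t : ℤ) (ht : 1 ≤ t) (p : ℤ × ℤ) :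
    p ∈ St2 t ↔ |p.1| + |p.2| = t ∧ (p.2 < 0 ∨ (p.2 = 0 ∧ 0 < p.1)) := by
  simp only [St2, Set.mem_union, Set.mem_setOf_eq, Prod.ext_iff, Int.abs_eq_natAbs]
  constructor
  · rintro (⟨i, h1, h2, h3, h4⟩ | ⟨i, h1, h2, h3, h4⟩) <;> omega
  · rintro ⟨habs, h⟩
    by_cases hx : p.1 ≤ 0
    · exact Or.inl ⟨-p.2, by omega, by omega, by omega, by omega⟩
    · exact Or.inr ⟨p.1, by omega, by omega, rfl, by omega⟩

lemma St1_chain (t : ℤ) : IsChain Preceq2 (St1 t) := by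
  rintro x (⟨i, hi1, hi2, rfl⟩ | ⟨i, hi1, hi2, rfl⟩) y
      (⟨j, hj1, hj2, rfl⟩ | ⟨j, hj1, hj2, rfl⟩) hne <;>
    simp only [Preceq2, ne_eq, Prod.mk.injEq, not_and] at * <;> omega

lemma St2_chain (t : ℤ) : IsChain Preceq2 (St2 t) := by
  rintro x (⟨i, hi1, hi2, rfl⟩ | ⟨i, hi1, hi2, rfl⟩) y
      (⟨j, hj1, hj2, rfl⟩ | ⟨j, hj1, hj2, rfl⟩) hne <;>
    simp only [Preceq2, ne_eq, Prod.mk.injEq, not_and] at * <;> omega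

lemma anti_chain_eq {A C : Set (ℤ × ℤ)} (hA : IsAntichain Preceq2 A)
    (hC : IsChain Preceq2 C) {p q : ℤ × ℤ} (hp : p ∈ A) (hp' : p ∈ C)
    (hq : q ∈ A) (hq' : q ∈ C) : p = q := by
  by_contra h
  rcases hC hp' hq' h with h' | h'
  · exact hA hp hq h h'
  · exact hA hq hp (Ne.symm h) h'

/-- Lemma 9: for every `t ≥ 1`, `S_t¹` and `S_t²` are chains under `⪯`
and partition `S_t`; consequently every antichain contained in
`{a ∈ ℤ² : 1 ≤ |a₁| + |a₂| ≤ n}` has at most `2n` elements. -/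
theorem statement16 :
    (∀ t : ℤ, 1 ≤ t →
      IsChain Preceq2 (St1 t) ∧ IsChain Preceq2 (St2 t) ∧
        St1 t ∪ St2 t = St t ∧ St1 t ∩ St2 t = ∅) ∧
      ∀ (n : ℕ) (A : Set (ℤ × ℤ)),
        (∀ p ∈ A, 1 ≤ |p.1| + |p.2| ∧ |p.1| + |p.2| ≤ (n : ℤ)) →
        IsAntichain Preceq2 A → A.Finite ∧ A.ncard ≤ 2 * n := by
  constructor
  · intro t ht
    refine ⟨St1_chain t, St2_chain t, ?_, ?_⟩
    · ext p
      simp only [Set.mem_union, St1_char t ht, St2_char t ht, St, Set.mem_setOf_eq,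
        Int.abs_eq_natAbs]
      omega
    · ext p
      simp only [Set.mem_inter_iff, St1_char t ht, St2_char t ht, Set.mem_empty_iff_false,
        iff_false, not_and]
      intro h1 h2
      omega
  · intro n A hA hanti
    set F : ℤ × ℤ → ℤ × Bool :=
      fun p => (|p.1| + |p.2|, decide (0 < p.2 ∨ (p.2 = 0 ∧ p.1 < 0))) with hF
    have hinj : Set.InjOn F A := by
      intro p hp q hq hpq
      have h1 : |p.1| + |p.2| = |q.1| + |q.2| := congrArg Prod.fst hpq
      have h2 : ((0 < p.2 ∨ (p.2 = 0 ∧ p.1 < 0)) ↔ (0 < q.2 ∨ (q.2 = 0 ∧ q.1 < 0))) := by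
        exact decide_eq_decide.mp (congrArg Prod.snd hpq)
      set t := |p.1| + |p.2| with hts
      have htp := (hA p hp).1
      have htq := (hA q hq).1
      by_cases hc : 0 < p.2 ∨ (p.2 = 0 ∧ p.1 < 0)
      · exact anti_chain_eq hanti (St1_chain t) hp
          ((St1_char t htp p).2 ⟨rfl, hc⟩) hq ((St1_char t htp q).2 ⟨h1.symm, h2.1 hc⟩)
      · have hc2 : p.2 < 0 ∨ (p.2 = 0 ∧ 0 < p.1) := by
          simp only [Int.abs_eq_natAbs] at htp hts
          omega
        have hc2q : q.2 < 0 ∨ (q.2 = 0 ∧ 0 < q.1) := by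
          have hcq : ¬(0 < q.2 ∨ (q.2 = 0 ∧ q.1 < 0)) := fun h => hc (h2.2 h)
          have h1' := h1
          simp only [Int.abs_eq_natAbs] at htp hts h1'
          omega
        exact anti_chain_eq hanti (St2_chain t) hp
          ((St2_char t htp p).2 ⟨rfl, hc2⟩) hq ((St2_char t htp q).2 ⟨h1.symm, hc2q⟩)
    have hsub : F '' A ⊆ ↑(Finset.Icc (1 : ℤ) (n : ℤ) ×ˢ (Finset.univ : Finset Bool)) := by
      rintro _ ⟨p, hp, rfl⟩
      simp only [Finset.coe_product, Set.mem_prod, Finset.mem_coe, Finset.mem_Icc]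
      exact ⟨⟨(hA p hp).1, (hA p hp).2⟩, Finset.mem_univ _⟩
    have hfinimg : (F '' A).Finite :=
      Set.Finite.subset (Finset.finite_toSet _) hsub
    have hfin : A.Finite := Set.Finite.of_finite_image hfinimg hinj
    refine ⟨hfin, ?_⟩
    calc A.ncard = (F '' A).ncard := (Set.ncard_image_of_injOn hinj).symm
      _ ≤ (Finset.Icc (1 : ℤ) (n : ℤ) ×ˢ (Finset.univ : Finset Bool)).card := by
          rw [← Set.ncard_coe_finset]
          exact Set.ncard_le_ncard hsub (Finset.finite_toSet _)
      _ ≤ 2 * n := by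
          rw [Finset.card_product, Int.card_Icc]
          simp
          omega
end

section
/- Let A ∈ 𝒮ⁿ[k] be a Robinson matrix and let Π : [n] → ℝ be a strictly monotone uniform embedding of A with respect to d ∈ 𝔻ᵏ. Then there exists a strictly increasing map Π′ : [n] → ℝ such that for all u < v in [n] and all t ∈ {0,…,k}: a_{u,v} = t if and only if d_{t+1} < Π′(v) − Π′(u) < d_t, where by convention d_0 = +∞ and d_{k+1} = 0. -/
lemma d_antitone (k : ℕ) (d : ℕ → ℝ) (hd : IsThreshold k d) :
    ∀ i j, 1 ≤ i → i ≤ j → j ≤ k → d j ≤ d i := by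
  intro i j h1 hij hjk
  induction j with
  | zero => omega
  | succ m ih =>
    rcases Nat.eq_or_lt_of_le hij with h | h
    · rw [h]
    · have h2 : d (m + 1) < d m := hd.1 m (by omega) (by omega)
      have h3 := ih (by omega) (by omega)
      linarith

/-- Lemma 7: if `Π` is a strictly monotone uniform embedding of a Robinson
matrix `A` with respect to `d ∈ 𝔻ᵏ`, then there exists a strictly increasing map `Π′`
satisfying the strict inequality system for `A` with respect to `d` (with conventions
`d_0 = +∞`, `d_{k+1} = 0`). -/
theorem statement19 (n k : ℕ) (hn : 1 ≤ n) (hk : 1 ≤ k) (a : Fin n → Fin n → ℕ)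
    (hA : IsRobinson n k a) (d : ℕ → ℝ) (hd : IsThreshold k d)
    (f : Fin n → ℝ) (hf : IsUnifEmb n k a d f)
    (hmono : StrictMono f ∨ StrictAnti f) :
    ∃ g : Fin n → ℝ, StrictMono g ∧ SatisfiesStrict n k a d g := by
  -- Replace f by a strictly increasing g0 with the same absolute differences.
  obtain ⟨g0, hg0mono, habs⟩ :
      ∃ g0 : Fin n → ℝ, StrictMono g0 ∧ ∀ u v : Fin n, u < v →
        |f v - f u| = g0 v - g0 u := by
    rcases hmono with h | h
    · exact ⟨f, h, fun u v huv => abs_of_pos (sub_pos.2 (h huv))⟩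
    · refine ⟨fun x => -f x, fun x y hxy => by simpa using h hxy, fun u v huv => ?_⟩
      have : f v < f u := h huv
      rw [abs_of_neg (by linarith)]; ring
  -- Choose a scaling constant c' ∈ (0,1) close enough to 1.
  classical
  set P : Finset (Fin n × Fin n) :=
    Finset.univ.filter (fun p => p.1 < p.2 ∧ a p.1 p.2 ≠ k) with hP
  set r : Fin n × Fin n → ℝ :=
    fun p => d (a p.1 p.2 + 1) / (g0 p.2 - g0 p.1) with hr
  set c : ℝ := P.fold max (1 / 2) r with hc
  have hPmem : ∀ p ∈ P, p.1 < p.2 ∧ a p.1 p.2 ≠ k := by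
    intro p hp
    simpa [hP] using (Finset.mem_filter.1 hp).2
  have hc1 : c < 1 := by
    rw [hc, Finset.fold_max_lt]
    refine ⟨by norm_num, fun p hp => ?_⟩
    obtain ⟨hlt, hne⟩ := hPmem p hp
    have hD : 0 < g0 p.2 - g0 p.1 := sub_pos.2 (hg0mono hlt)
    have hAle : a p.1 p.2 ≤ k := hA.2.2.1 p.1 p.2
    have := (hf p.1 p.2 (a p.1 p.2) hAle).1 rfl
    rcases this.1 with h | h
    · exact absurd h hne
    · rw [habs p.1 p.2 hlt] at h
      rw [hr, div_lt_one hD]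
      linarith
  have hchalf : (1 / 2 : ℝ) ≤ c := by
    rw [hc, Finset.le_fold_max]; exact Or.inl le_rfl
  set c' : ℝ := (c + 1) / 2 with hc'
  have hc'pos : 0 < c' := by rw [hc']; linarith
  have hc'1 : c' < 1 := by rw [hc']; linarith
  have hcc' : c < c' := by rw [hc']; linarith
  have hrle : ∀ p ∈ P, r p ≤ c := by
    intro p hp
    rw [hc, Finset.le_fold_max]
    exact Or.inr ⟨p, hp, le_refl _⟩
  refine ⟨fun x => c' * g0 x, fun x y hxy => by
    exact mul_lt_mul_of_pos_left (hg0mono hxy) hc'pos, ?_⟩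
  intro u v huv t ht
  have hD : 0 < g0 v - g0 u := sub_pos.2 (hg0mono huv)
  have hdiff : c' * g0 v - c' * g0 u = c' * (g0 v - g0 u) := by ring
  have hAle : a u v ≤ k := hA.2.2.1 u v
  -- key: the forward conditions hold for s = a u v
  have key : ∀ s, s ≤ k → a u v = s →
      ((if s = k then (0 : ℝ) else d (s + 1)) < c' * (g0 v - g0 u)) ∧
        (s = 0 ∨ c' * (g0 v - g0 u) < d s) := by
    intro s hs hsv
    have hfs := (hf u v s hs).1 hsv
    rw [habs u v huv] at hfs
    constructor
    · by_cases hsk : s = k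
      · rw [if_pos hsk]; positivity
      · rw [if_neg hsk]
        have hpP : (u, v) ∈ P := by
          rw [hP]; simp only [Finset.mem_filter, Finset.mem_univ, true_and]
          exact ⟨huv, by rw [hsv]; exact hsk⟩
        have h1 : r (u, v) ≤ c := hrle _ hpP
        have h2 : r (u, v) = d (s + 1) / (g0 v - g0 u) := by simp only [hr, hsv]
        rw [h2] at h1
        have : d (s + 1) / (g0 v - g0 u) < c' := lt_of_le_of_lt h1 hcc'
        rw [div_lt_iff₀ hD] at this
        linarith [this]
    · by_cases hs0 : s = 0
      · exact Or.inl hs0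
      · refine Or.inr ?_
        rcases hfs.2 with h | h
        · exact absurd h hs0
        · nlinarith
  have hkey0 := key (a u v) hAle rfl
  constructor
  · intro hav
    obtain ⟨h1, h2⟩ := key t ht hav
    rw [hdiff]
    exact ⟨h1, h2⟩
  · rw [hdiff]
    rintro ⟨h1, h2⟩
    by_contra hne
    -- disjointness of the intervals
    have disj : ∀ s s' : ℕ, s < s' → s' ≤ k →
        ((if s = k then (0 : ℝ) else d (s + 1)) < c' * (g0 v - g0 u)) →
        c' * (g0 v - g0 u) < d s' → False := by
      intro s s' hss hs'k hL hU
      have hsk : s ≠ k := by omega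
      rw [if_neg hsk] at hL
      have : d s' ≤ d (s + 1) := d_antitone k d hd (s + 1) s' (by omega) (by omega) hs'k
      linarith
    rcases Nat.lt_or_ge t (a u v) with hlt | hge
    · have ht0 : a u v ≠ 0 := by omega
      rcases hkey0.2 with h | h
      · exact ht0 h
      · exact disj t (a u v) hlt hAle h1 h
    · have hlt : a u v < t := by omega
      have ht0 : t ≠ 0 := by omega
      rcases h2 with h | h
      · exact ht0 h
      · exact disj (a u v) t hlt ht hkey0.1 h
end
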